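/- arXiv:2605.10692 — 6 statements merged into one kernel-verified Lean document; each statement's English description precedes it below -/
import Mathlib

section
/- Let G be a simple graph on a finite vertex set V and let c : V → C be any vertex coloring (not necessarily proper). Let S be a list of colors of length at least 2, written S = s₁ :: s₂ :: S', and let v ∈ V with c(v) = s₁. Then B_S(v) = B_{s₁ :: S'}(v) ∪ ⋃ { B_{s₂ :: S'}(w) : w ∈ N[v], c(w) = s₂ }, where N[v] = {v} ∪ {w : w adjacent to v} is the closed neighborhood of v, s₁ :: S' is the list obtained from S by deleting its second entry, and s₂ :: S' is the tail of S. -/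
/-!
A path from `v` whose colors fit into `s₁ :: s₂ :: S'` starts with color `s₁`; either the color
of its second vertex `w` is matched inside `S'`, and then the path already lies in
`B_{s₁::S'}(v)`, or it is matched with `s₂`, and then the rest of the path witnesses
`u ∈ B_{s₂::S'}(w)`. Conversely, a path from a neighbour `w` of `v` is prolonged to `v`, unless it
already passes through `v`, in which case its part from `v` on is a shorter witness.
-/

/-- Given a vertex coloring `c` and a list `S` of colors, `ballS G c S v` is the set of
vertices `u` reachable from `v` by a path whose list of vertex colors (read in order from
`v` to `u`) is a (not necessarily contiguous) sublist of `S`. -/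
def ballS {V C : Type*} (G : SimpleGraph V) (c : V → C) (S : List C) (v : V) : Set V :=
  {u | ∃ p : G.Walk v u, p.IsPath ∧ (p.support.map c).Sublist S}

section

variable {V C : Type*} {G : SimpleGraph V} {c : V → C}

open SimpleGraph.Walk

theorem ballS_mono {S T : List C} (h : S.Sublist T) (v : V) :
    ballS G c S v ⊆ ballS G c T v :=
  fun _ ⟨p, hp, hs⟩ => ⟨p, hp, hs.trans h⟩

theorem mem_ballS_cons_self {s : C} (T : List C) {v : V} (hv : c v = s) :
    v ∈ ballS G c (s :: T) v :=
  ⟨.nil, .nil, by simp [hv]⟩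

theorem ballS_subset_ballS_cons_of_adj {s : C} {T : List C} {v w : V} (hadj : G.Adj v w)
    (hv : c v = s) : ballS G c T w ⊆ ballS G c (s :: T) v := by
  classical
  rintro u ⟨q, hq, hs⟩
  by_cases hvq : v ∈ q.support
  · exact ⟨q.dropUntil v hvq, hq.dropUntil hvq,
      (((q.support_dropUntil_suffix_support hvq).sublist.map c).trans hs).cons s⟩
  · exact ⟨.cons hadj q, hq.cons hvq, by simpa [hv] using hs⟩

theorem mem_ballS_cons_cons {s₁ s₂ : C} {S' : List C} {u v : V} (hv : c v = s₁)
    (hu : u ∈ ballS G c (s₁ :: s₂ :: S') v) :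
    u ∈ ballS G c (s₁ :: S') v ∨ ∃ w, G.Adj v w ∧ c w = s₂ ∧ u ∈ ballS G c (s₂ :: S') w := by
  obtain ⟨p, hp, hs⟩ := hu
  cases p with
  | nil => exact .inl (mem_ballS_cons_self S' hv)
  | @cons _ w _ hadj q =>
    rw [support_cons, List.map_cons, hv, List.cons_sublist_cons] at hs
    rcases List.sublist_cons_iff.mp hs with hS' | ⟨r, hr, -⟩
    · exact .inl ⟨.cons hadj q, hp, by simpa [hv] using hS'⟩
    · have hw : c w = s₂ := by
        rw [← q.cons_tail_support, List.map_cons] at hr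
        exact (List.cons.inj hr).1
      exact .inr ⟨w, hadj, hw, q, hp.of_cons, hs⟩

end

theorem stmt_5_general {V C : Type*} (G : SimpleGraph V) (c : V → C)
    (s₁ s₂ : C) (S' : List C) (v : V) (hv : c v = s₁) :
    ballS G c (s₁ :: s₂ :: S') v =
      ballS G c (s₁ :: S') v ∪
        ⋃ w ∈ {w : V | (w = v ∨ G.Adj v w) ∧ c w = s₂}, ballS G c (s₂ :: S') w := by
  refine subset_antisymm (fun u hu => ?_) (Set.union_subset ?_ (Set.iUnion₂_subset ?_))
  · rcases mem_ballS_cons_cons hv hu with hu | ⟨w, hadj, hw, hu⟩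
    · exact .inl hu
    · exact .inr (Set.mem_biUnion ⟨.inr hadj, hw⟩ hu)
  · exact ballS_mono ((List.sublist_cons_self s₂ S').cons_cons s₁) v
  · rintro w ⟨rfl | hadj, -⟩
    · exact ballS_mono ((List.Sublist.refl _).cons s₁) w
    · exact ballS_subset_ballS_cons_of_adj hadj hv

/-- the ball-growing equation. For any simple graph on a finite vertex set,
any (not necessarily proper) coloring `c`, a color list `S = s₁ :: s₂ :: S'`, and a vertex
`v` with `c v = s₁`,
`B_S(v) = B_{s₁::S'}(v) ∪ ⋃ {B_{s₂::S'}(w) : w ∈ N[v], c w = s₂}`,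
where `N[v]` is the closed neighborhood of `v`. -/
theorem stmt_5 {V C : Type*} [Fintype V] (G : SimpleGraph V) (c : V → C)
    (s₁ s₂ : C) (S' : List C) (v : V) (hv : c v = s₁) :
    ballS G c (s₁ :: s₂ :: S') v =
      ballS G c (s₁ :: S') v ∪
        ⋃ w ∈ {w : V | (w = v ∨ G.Adj v w) ∧ c w = s₂}, ballS G c (s₂ :: S') w :=
  stmt_5_general G c s₁ s₂ S' v hv
end

section
/- Let C ⊆ ℝ² be a finite set, let p ∈ C, and suppose ‖c − p‖ ≤ 1 for every c ∈ C. Let F = ⋃_{c∈C} B̄(c,1). Let y ∈ ℝ² with ‖y − p‖ < 1/2 and let u ∈ ℝ² with ‖u‖ = 1. Then there is exactly one t ≥ 0 such that y + t·u lies on the frontier (topological boundary) of F. -/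
/-!
Every point `y` of the closed disk `B̄(p, 1/2)` sees the whole flower `F`: if `z ∈ B̄(c, 1)`,
each point of the segment `[y, z]` lies in `B̄(p, 1)` or in `B̄(c, 1)`, by an elementary
computation in the inner product space. Applying homotheties centred at `z` to the open disk
`B(p, 1/2)` shows that when `‖y - p‖ < 1/2` the half-open segment `[y, z)` even lies in the
interior of `F`. Along a ray from such a `y`, the parameters landing in the compact set `F`
therefore form an interval `[0, T]` whose points before `T` are interior, so `T` is the only
parameter on the frontier.
-/

open Metric Set AffineMap Filter Topology

section TwoBalls

variable {E : Type*} [NormedAddCommGroup E] [InnerProductSpace ℝ E]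

theorem norm_smul_sub_sq_eq (b d : E) (s : ℝ) :
    ‖s • b - d‖ ^ 2 = s * ‖b - d‖ ^ 2 + (s ^ 2 - s) * ‖b‖ ^ 2 + (1 - s) * ‖d‖ ^ 2 := by
  rw [norm_sub_sq_real, norm_sub_sq_real, norm_smul, real_inner_smul_left, mul_pow,
    Real.norm_eq_abs, sq_abs]
  ring

theorem norm_smul_sub_le_of_lt_mul_norm {b d : E} {s : ℝ} (hs0 : 0 ≤ s) (hs1 : s ≤ 1)
    (hd : ‖d‖ ≤ 1) (hbd : ‖b - d‖ ≤ 1) (hb : (1 + s) / 2 < s * ‖b‖) :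
    ‖s • b - d‖ ≤ (1 + s) / 2 := by
  -- `s (s ‖b‖²) = (s ‖b‖)² > ((1 + s) / 2)² ≥ s (3 + s) / 4`, and by the identity above
  -- `‖s • b - d‖² ≤ 1 - (1 - s) (s ‖b‖²) ≤ 1 - (1 - s) (3 + s) / 4 = ((1 + s) / 2)²`.
  have hs : 0 < s := by nlinarith [norm_nonneg b]
  have hb2 : (3 + s) / 4 ≤ s * ‖b‖ ^ 2 := by
    have : s * ((3 + s) / 4) < s * (s * ‖b‖ ^ 2) := by nlinarith
    exact (lt_of_mul_lt_mul_left this hs.le).le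
  have hbd2 : ‖b - d‖ ^ 2 ≤ 1 := pow_le_one₀ (norm_nonneg _) hbd
  have hd2 : ‖d‖ ^ 2 ≤ 1 := pow_le_one₀ (norm_nonneg _) hd
  have hsq : ‖s • b - d‖ ^ 2 ≤ ((1 + s) / 2) ^ 2 := by
    rw [norm_smul_sub_sq_eq]
    nlinarith [mul_le_mul_of_nonneg_left hb2 (sub_nonneg.2 hs1),
      mul_le_mul_of_nonneg_left hbd2 hs0, mul_le_mul_of_nonneg_left hd2 (sub_nonneg.2 hs1)]
  exact (pow_le_pow_iff_left₀ (norm_nonneg _) (by positivity) two_ne_zero).1 hsq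

theorem norm_le_one_or_norm_sub_le_one {a b d : E} {s : ℝ} (hs0 : 0 ≤ s) (hs1 : s ≤ 1)
    (ha : ‖a‖ ≤ 1 / 2) (hd : ‖d‖ ≤ 1) (hbd : ‖b - d‖ ≤ 1) :
    ‖(1 - s) • a + s • b‖ ≤ 1 ∨ ‖(1 - s) • a + s • b - d‖ ≤ 1 := by
  have hs1' : 0 ≤ 1 - s := sub_nonneg.2 hs1
  have hsa : ‖(1 - s) • a‖ ≤ (1 - s) / 2 := by
    rw [norm_smul, Real.norm_of_nonneg hs1']; nlinarith
  refine (le_or_gt (s * ‖b‖) ((1 + s) / 2)).imp (fun hb => ?_) (fun hb => ?_)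
  · calc ‖(1 - s) • a + s • b‖ ≤ ‖(1 - s) • a‖ + ‖s • b‖ := norm_add_le _ _
      _ ≤ (1 - s) / 2 + (1 + s) / 2 := by
        rw [norm_smul s b, Real.norm_of_nonneg hs0]; linarith
      _ = 1 := by ring
  · calc ‖(1 - s) • a + s • b - d‖ ≤ ‖(1 - s) • a‖ + ‖s • b - d‖ := by
          rw [add_sub_assoc]; exact norm_add_le _ _
      _ ≤ (1 - s) / 2 + (1 + s) / 2 :=
        add_le_add hsa (norm_smul_sub_le_of_lt_mul_norm hs0 hs1 hd hbd hb)
      _ = 1 := by ring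

end TwoBalls

section Flower

variable {E : Type*} [NormedAddCommGroup E] [InnerProductSpace ℝ E] {C : Set E} {p : E}

theorem segment_subset_biUnion_closedBall (hp : p ∈ C) (hC : ∀ c ∈ C, dist c p ≤ 1) {y z : E}
    (hy : dist y p ≤ 1 / 2) (hz : z ∈ ⋃ c ∈ C, closedBall c 1) :
    segment ℝ y z ⊆ ⋃ c ∈ C, closedBall c 1 := by
  rw [segment_eq_image_lineMap]
  rintro _ ⟨s, ⟨hs0, hs1⟩, rfl⟩
  obtain ⟨c, hc, hzc⟩ := mem_iUnion₂.1 hz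
  rw [dist_eq_norm] at hy
  rw [mem_closedBall, dist_eq_norm] at hzc
  have hw : lineMap y z s - p = (1 - s) • (y - p) + s • (z - p) := by
    rw [lineMap_apply_module]; module
  rcases norm_le_one_or_norm_sub_le_one hs0 hs1 hy (dist_eq_norm c p ▸ hC c hc)
    (by rwa [sub_sub_sub_cancel_right]) with h | h
  · exact mem_biUnion hp (by rwa [mem_closedBall, dist_eq_norm, hw])
  · refine mem_biUnion hc ?_
    rwa [mem_closedBall, dist_eq_norm, ← sub_sub_sub_cancel_right _ c p, hw]

theorem lineMap_mem_interior_biUnion_closedBall (hp : p ∈ C) (hC : ∀ c ∈ C, dist c p ≤ 1)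
    {y z : E} (hy : dist y p < 1 / 2) (hz : z ∈ ⋃ c ∈ C, closedBall c 1) {s : ℝ}
    (hs : s ∈ Ico (0 : ℝ) 1) :
    lineMap y z s ∈ interior (⋃ c ∈ C, closedBall c 1) := by
  have hlineMap : ∀ y', homothety z (1 - s) y' = lineMap y' z s := fun y' => by
    rw [homothety_eq_lineMap, lineMap_apply_one_sub]
  refine interior_maximal ?_ ((homothety_isOpenMap z (1 - s) (by linarith [hs.2])) _ isOpen_ball)
    ⟨y, hy, hlineMap y⟩
  rintro _ ⟨y', hy', rfl⟩
  rw [hlineMap]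
  exact segment_subset_biUnion_closedBall hp hC (mem_ball.1 hy').le hz
    (lineMap_mem_segment ℝ y' z (Ico_subset_Icc_self hs))

end Flower

theorem existsUnique_add_smul_mem_frontier {E : Type*} [NormedAddCommGroup E] [NormedSpace ℝ E]
    {F : Set E} (hFc : IsClosed F) (hFb : Bornology.IsBounded F) {y : E} (hy : y ∈ F)
    (hstar : ∀ z ∈ F, ∀ s ∈ Ico (0 : ℝ) 1, lineMap y z s ∈ interior F) {u : E} (hu : u ≠ 0) :
    ∃! t : ℝ, 0 ≤ t ∧ y + t • u ∈ frontier F := by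
  have hcont : Continuous fun t : ℝ => y + t • u := by fun_prop
  set S := {t : ℝ | 0 ≤ t ∧ y + t • u ∈ F}
  have hS : IsCompact S := by
    obtain ⟨r, hr⟩ := (isBounded_iff_subset_closedBall y).1 hFb
    refine (isCompact_Icc (a := 0) (b := r / ‖u‖)).of_isClosed_subset
      (isClosed_Ici.inter (hFc.preimage hcont)) fun t ⟨ht0, htF⟩ => ⟨ht0, ?_⟩
    have := hr htF
    rw [mem_closedBall, dist_eq_norm, add_sub_cancel_left, norm_smul, Real.norm_of_nonneg ht0]
      at this
    exact (le_div_iff₀ (norm_pos_iff.2 hu)).2 this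
  obtain ⟨T, ⟨hT0, hTF⟩, hTmax⟩ := hS.exists_isGreatest ⟨0, le_rfl, by simpa using hy⟩
  have hbelow : ∀ t, 0 ≤ t → t < T → y + t • u ∈ interior F := fun t ht htT => by
    have hT : 0 < T := ht.trans_lt htT
    convert hstar _ hTF (t / T) ⟨div_nonneg ht hT.le, (div_lt_one hT).2 htT⟩ using 1
    rw [lineMap_apply_module', add_sub_cancel_left, smul_smul, div_mul_cancel₀ _ hT.ne', add_comm]
  refine ⟨T, ⟨hT0, hFc.frontier_eq ▸ ⟨hTF, fun hint => ?_⟩⟩, fun t ⟨ht0, ht⟩ => ?_⟩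
  · have hnhds : ∀ᶠ t in 𝓝[>] T, y + t • u ∈ interior F :=
      nhdsWithin_le_nhds ((isOpen_interior.preimage hcont).mem_nhds hint)
    obtain ⟨t, ht, hTt⟩ := (hnhds.and self_mem_nhdsWithin).exists
    exact (hTt : T < t).not_ge (hTmax ⟨hT0.trans hTt.le, interior_subset ht⟩)
  · rw [hFc.frontier_eq] at ht
    by_contra hne
    exact ht.2 (hbelow t ht0 ((hTmax ⟨ht0, ht.1⟩).lt_of_ne hne))

/-- Let `C ⊆ ℝ²` be finite, `p ∈ C`, with every point of `C` within
distance 1 of `p`, and let `F = ⋃_{c ∈ C} B̄(c,1)` be the flower of `p`. For any `y` with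
`‖y − p‖ < 1/2` and any unit vector `u`, there is exactly one `t ≥ 0` such that `y + t·u`
lies on the topological boundary of `F`. -/
theorem stmt_8 (C : Finset (EuclideanSpace ℝ (Fin 2)))
    (p : EuclideanSpace ℝ (Fin 2)) (hp : p ∈ C)
    (hC : ∀ c ∈ C, dist c p ≤ 1)
    (y : EuclideanSpace ℝ (Fin 2)) (hy : dist y p < 1 / 2)
    (u : EuclideanSpace ℝ (Fin 2)) (hu : ‖u‖ = 1) :
    ∃! t : ℝ, 0 ≤ t ∧ y + t • u ∈ frontier (⋃ c ∈ C, closedBall c 1) := by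
  exact existsUnique_add_smul_mem_frontier
    (isClosed_biUnion_finset fun c _ => isClosed_closedBall)
    ((Bornology.isBounded_biUnion_finset C).2 fun c _ => isBounded_closedBall)
    (mem_biUnion hp (mem_closedBall.2 (by linarith)))
    (fun z hz s hs => lineMap_mem_interior_biUnion_closedBall (Finset.mem_coe.2 hp) hC hy hz hs)
    (norm_ne_zero_iff.1 (hu ▸ one_ne_zero))
end

section
/- There exists δ₀ ∈ (0,1) such that for every δ ∈ (0, δ₀] the following holds. Let A, B ⊆ ℝ² be closed axis-aligned squares of side length δ with 1 − 2√2·δ ≤ dist(A,B) ≤ 2. Let p, q ∈ A with p ≠ q, and suppose there is t ≥ 1 with p + t·(q − p) ∈ B (i.e., q lies between p and B on the line through p and q). Then every x ∈ ℝ² such that ‖x − p‖ ≤ 1 and the closed unit disk B̄(x,1) intersects B satisfies ‖x − q‖ ≤ 1; that is, every unit disk containing p and intersecting B also contains q. -/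
/-!
By Stewart's theorem, for `q` strictly between `p` and `r`,
`|pr|·|xq|² = |qr|·|xp|² + |pq|·|xr|² − |pq|·|qr|·|pr|`, so `|xq| ≤ 1` as soon as `|xp| ≤ 1`
and `|xr|² ≤ 1 + |pr|·|qr|`. With `ε = √2·δ` the diameter of a square, `r = p + t(q − p) ∈ B`
satisfies `|xr| ≤ 1 + ε`, while `|pr|, |qr| ≥ 1 − 2ε` by the separation of the squares, and
`(1 + ε)² ≤ 1 + (1 − 2ε)²` holds for `ε ≤ 1/6`.
-/

/-- The closed axis-aligned square of side length `δ` centered at `c` in the plane. -/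
def axisSquare (c : EuclideanSpace ℝ (Fin 2)) (δ : ℝ) : Set (EuclideanSpace ℝ (Fin 2)) :=
  {z | ∀ i, |z i - c i| ≤ δ / 2}

open EuclideanGeometry

theorem Sbtw.dist_le_of_dist_sq_le_add_mul {V P : Type*} [NormedAddCommGroup V]
    [InnerProductSpace ℝ V] [MetricSpace P] [NormedAddTorsor V P] {p q r x : P} {R : ℝ}
    (h : Sbtw ℝ p q r) (hp : dist x p ≤ R) (hr : dist x r ^ 2 ≤ R ^ 2 + dist p r * dist q r) :
    dist x q ≤ R := by
  have stewart := dist_sq_mul_dist_add_dist_sq_mul_dist x p r q h.angle₁₂₃_eq_pi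
  have hsum : dist p q + dist q r = dist p r := h.wbtw.dist_add_dist
  have hpr : 0 < dist p r := dist_pos.2 h.left_ne_right
  have hxp : dist x p ^ 2 ≤ R ^ 2 := pow_le_pow_left₀ dist_nonneg hp 2
  have hsq : dist p r * dist x q ^ 2 ≤ dist p r * R ^ 2 := by
    rw [dist_comm r q] at stewart
    nlinarith [dist_nonneg (x := p) (y := q), dist_nonneg (x := q) (y := r)]
  exact (pow_le_pow_iff_left₀ dist_nonneg (dist_nonneg.trans hp) two_ne_zero).1
    (le_of_mul_le_mul_left hsq hpr)

theorem dist_le_of_mem_axisSquare {c z w : EuclideanSpace ℝ (Fin 2)} {δ : ℝ} (hδ : 0 ≤ δ)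
    (hz : z ∈ axisSquare c δ) (hw : w ∈ axisSquare c δ) : dist z w ≤ √2 * δ := by
  have hcoord (i : Fin 2) : dist (z i) (w i) ^ 2 ≤ δ ^ 2 := by
    refine pow_le_pow_left₀ dist_nonneg ?_ 2
    calc dist (z i) (w i) ≤ dist (z i) (c i) + dist (c i) (w i) := dist_triangle _ _ _
      _ ≤ δ / 2 + δ / 2 := by
        rw [Real.dist_eq, Real.dist_eq, abs_sub_comm (c i)]
        exact add_le_add (hz i) (hw i)
      _ = δ := add_halves δ
  rw [EuclideanSpace.dist_eq, ← Real.sqrt_sq hδ, ← Real.sqrt_mul zero_le_two]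
  refine Real.sqrt_le_sqrt ?_
  simpa [Fin.sum_univ_two, two_mul] using add_le_add (hcoord 0) (hcoord 1)

/-- There is `δ₀ ∈ (0,1)` such that for all `0 < δ ≤ δ₀`: if `A, B` are
closed axis-aligned squares of side `δ` with `1 − 2√2·δ ≤ dist(A,B) ≤ 2`, `p, q ∈ A` are
distinct, and `q` lies between `p` and `B` on the line through `p` and `q` (i.e.
`p + t(q−p) ∈ B` for some `t ≥ 1`), then every unit disk containing `p` and intersecting `B`
also contains `q`. -/
theorem stmt_10 :
    ∃ δ₀ : ℝ, 0 < δ₀ ∧ δ₀ < 1 ∧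
      ∀ δ : ℝ, 0 < δ → δ ≤ δ₀ →
      ∀ cA cB : EuclideanSpace ℝ (Fin 2),
      (∀ a ∈ axisSquare cA δ, ∀ b ∈ axisSquare cB δ,
        1 - 2 * Real.sqrt 2 * δ ≤ dist a b) →
      (∃ a ∈ axisSquare cA δ, ∃ b ∈ axisSquare cB δ, dist a b ≤ 2) →
      ∀ p ∈ axisSquare cA δ, ∀ q ∈ axisSquare cA δ, p ≠ q →
      (∃ t : ℝ, 1 ≤ t ∧ p + t • (q - p) ∈ axisSquare cB δ) →
      ∀ x : EuclideanSpace ℝ (Fin 2), dist p x ≤ 1 →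
      (∃ b ∈ axisSquare cB δ, dist b x ≤ 1) →
      dist q x ≤ 1 := by
  refine ⟨1 / 10, by norm_num, by norm_num, ?_⟩
  intro δ hδ hδ₀ cA cB hsep _ p hp q hq hpq ⟨t, ht, hr⟩ x hpx ⟨b, hb, hbx⟩
  set r := p + t • (q - p)
  set ε := √2 * δ
  have hε : ε ≤ 1 / 6 := by
    nlinarith [Real.sqrt_nonneg 2, Real.sq_sqrt (zero_le_two (α := ℝ))]
  have hpr : 1 - 2 * ε ≤ dist p r := by linarith [hsep p hp r hr]
  have hqr : 1 - 2 * ε ≤ dist q r := by linarith [hsep q hq r hr]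
  have hxr : dist x r ≤ 1 + ε := by
    linarith [dist_triangle x b r, dist_comm b x, dist_le_of_mem_axisSquare hδ.le hb hr]
  have hbtw : Sbtw ℝ p q r := by
    refine ⟨?_, hpq.symm, dist_pos.1 (by linarith)⟩
    simpa [vadd_eq_add, add_comm] using
      wbtw_smul_vadd_smul_vadd_of_nonneg_of_le p (q - p) zero_le_one ht
  rw [dist_comm] at hpx ⊢
  refine hbtw.dist_le_of_dist_sq_le_add_mul hpx ?_
  nlinarith [dist_nonneg (x := x) (y := r), mul_le_mul hpr hqr (by linarith) dist_nonneg]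
end

section
/- Let Δ ≥ 1, let P₀, …, P_Δ be finite subsets of ℝ², let j ∈ {0, …, Δ−1}, and let μ ∈ (0,1). Assume that no two points p, p' ∈ P₀ ∪ ⋯ ∪ P_Δ satisfy y(p) − y(p') = 1. Then there exist functions φ : P₀ → ℝ and ψ : P_Δ → ℝ such that for every (p₀, p_Δ) ∈ P₀ × P_Δ the following are equivalent: (a) there exist p₁ ∈ P₁, …, p_{Δ−1} ∈ P_{Δ−1} such that ‖p_i − p_{i+1}‖∞ ≤ 1 for all 0 ≤ i ≤ Δ−1, p_j ∈ (μ,1)×(0,1), and p_{j+1} ∈ ((0,μ) ∪ (1,1+μ)) × (−1,1); (b) φ(p₀) < ψ(p_Δ). -/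
/-!
For `q` in the box `(μ,1)×(0,1)` and `q'` in `((0,μ) ∪ (1,1+μ))×(−1,1)`, the x-coordinates
always differ by less than 1 and `y(q') − y(q) < 1`, so the squares at `q` and `q'` meet iff
`y(q) − y(q') ≤ 1`, which by general position means `y(q) < y(q') + 1`. Splitting a chain
between `p_j` and `p_{j+1}`, a chain exists iff some `q` reachable from `p₀` and some `q'`
from which `p_Δ` is reachable satisfy this. Hence one can take for `φ(p₀)` the least such
`y(q)` and for `ψ(p_Δ)` the greatest such `y(q') + 1`, with sentinel values below and above all
candidates when no such point exists.
-/

open Set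

section LayeredWalk

variable {α : Type*} (R : α → α → Prop) (P : ℕ → Set α)

def IsLayeredWalk (a b : ℕ) (x y : α) (p : ℕ → α) : Prop :=
  p a = x ∧ p b = y ∧ (∀ i, a < i → i < b → p i ∈ P i) ∧
    ∀ i, a ≤ i → i < b → R (p i) (p (i + 1))

variable {R P} {a b c d j : ℕ} {x y : α} {p : ℕ → α}

theorem IsLayeredWalk.restrict (h : IsLayeredWalk R P a b x y p) (hac : a ≤ c) (hdb : d ≤ b) :
    IsLayeredWalk R P c d (p c) (p d) p :=
  ⟨rfl, rfl, fun i hci hid => h.2.2.1 i (by omega) (by omega),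
    fun i hci hid => h.2.2.2 i (by omega) (by omega)⟩

theorem IsLayeredWalk.mem_layer (h : IsLayeredWalk R P a b x y p) (hx : x ∈ P a) (hy : y ∈ P b)
    {i : ℕ} (hai : a ≤ i) (hib : i ≤ b) : p i ∈ P i := by
  obtain ⟨rfl, rfl, hP, -⟩ := h
  rcases hai.eq_or_lt with rfl | hai
  · exact hx
  rcases hib.eq_or_lt with rfl | hib
  · exact hy
  exact hP i hai hib

theorem IsLayeredWalk.append {p₁ p₂ : ℕ → α} {q q' : α}
    (h₁ : IsLayeredWalk R P a j x q p₁) (h₂ : IsLayeredWalk R P (j + 1) b q' y p₂)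
    (hq : q ∈ P j) (hq' : q' ∈ P (j + 1)) (hqq' : R q q') (haj : a ≤ j) (hjb : j < b) :
    IsLayeredWalk R P a b x y (fun i => if i ≤ j then p₁ i else p₂ i) := by
  obtain ⟨h₁a, h₁j, h₁P, h₁R⟩ := h₁
  obtain ⟨h₂j, h₂b, h₂P, h₂R⟩ := h₂
  refine ⟨by simp [haj, h₁a], by simp [hjb.not_ge, h₂b], fun i hai hib => ?_, fun i hai hib => ?_⟩
  · rcases lt_trichotomy i j with hij | rfl | hji
    · simpa [hij.le] using h₁P i hai hij
    · simpa [h₁j] using hq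
    · rcases (Nat.succ_le_of_lt hji).eq_or_lt with rfl | hji'
      · simpa [h₂j] using hq'
      · simpa [hji.not_ge] using h₂P i hji' hib
  · rcases lt_trichotomy i j with hij | rfl | hji
    · simpa [hij.le, Nat.succ_le_of_lt hij] using h₁R i hai hij
    · simpa [h₁j, h₂j] using hqq'
    · simpa [hji.not_ge, (Nat.lt_succ_of_lt hji).not_ge] using h₂R i hji hib

theorem exists_isLayeredWalk_iff_split (hx : x ∈ P a) (hy : y ∈ P b) (haj : a ≤ j) (hjb : j < b)
    (A B : Set α) :
    (∃ p, IsLayeredWalk R P a b x y p ∧ p j ∈ A ∧ p (j + 1) ∈ B) ↔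
      ∃ q ∈ P j ∩ A, ∃ q' ∈ P (j + 1) ∩ B, R q q' ∧
        (∃ p, IsLayeredWalk R P a j x q p) ∧ ∃ p, IsLayeredWalk R P (j + 1) b q' y p := by
  constructor
  · rintro ⟨p, hp, hA, hB⟩
    have h₁ := hp.restrict (c := a) (d := j) le_rfl hjb.le
    have h₂ := hp.restrict (c := j + 1) (d := b) (by omega) le_rfl
    rw [hp.1] at h₁
    rw [hp.2.1] at h₂
    exact ⟨p j, ⟨hp.mem_layer hx hy haj hjb.le, hA⟩,
      p (j + 1), ⟨hp.mem_layer hx hy (by omega) hjb, hB⟩, hp.2.2.2 j haj hjb, ⟨p, h₁⟩, ⟨p, h₂⟩⟩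
  · rintro ⟨q, ⟨hq, hA⟩, q', ⟨hq', hB⟩, hqq', ⟨p₁, h₁⟩, ⟨p₂, h₂⟩⟩
    exact ⟨_, h₁.append h₂ hq hq' hqq' haj hjb, by simpa [h₁.2.1] using hA,
      by simpa [h₂.1] using hB⟩

end LayeredWalk

theorem exists_forall_exists_lt_iff_lt {ι κ α : Type*} [LinearOrder α] [Nonempty α]
    (U V : Finset α) (S : ι → Finset α) (T : κ → Finset α)
    (hS : ∀ a, S a ⊆ U) (hT : ∀ b, T b ⊆ V) :
    ∃ φ : ι → α, ∃ ψ : κ → α, ∀ a b, (∃ s ∈ S a, ∃ t ∈ T b, s < t) ↔ φ a < ψ b := by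
  obtain ⟨M, hM⟩ := V.bddAbove
  obtain ⟨m, hm⟩ := (insert M U).bddBelow
  have hmM : m ≤ M := hm (Finset.mem_insert_self M U)
  refine ⟨fun a => (insert M (S a)).min' (Finset.insert_nonempty _ _),
    fun b => (insert m (T b)).max' (Finset.insert_nonempty _ _), fun a b => ⟨?_, fun h => ?_⟩⟩
  · rintro ⟨s, hs, t, ht, hst⟩
    exact ((Finset.min'_le _ s (Finset.mem_insert_of_mem hs)).trans_lt hst).trans_le
      (Finset.le_max' _ t (Finset.mem_insert_of_mem ht))
  · have hφ := Finset.min'_mem (insert M (S a)) (Finset.insert_nonempty _ _)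
    have hψ := Finset.max'_mem (insert m (T b)) (Finset.insert_nonempty _ _)
    have hψM : (insert m (T b)).max' (Finset.insert_nonempty _ _) ≤ M :=
      Finset.max'_le _ _ _ fun t ht =>
        (Finset.mem_insert.1 ht).elim (· ▸ hmM) fun ht => hM (hT b ht)
    have hmφ : m ≤ (insert M (S a)).min' (Finset.insert_nonempty _ _) :=
      Finset.le_min' _ _ _ fun s hs =>
        (Finset.mem_insert.1 hs).elim (· ▸ hmM) fun hs => hm (Finset.mem_insert_of_mem (hS a hs))
    rcases Finset.mem_insert.1 hφ with hφ | hφ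
    · exact absurd (hφ ▸ h) (not_lt.2 hψM)
    rcases Finset.mem_insert.1 hψ with hψ | hψ
    · exact absurd (hψ ▸ h) (not_lt.2 hmφ)
    exact ⟨_, hφ, _, hψ, h⟩

theorem dist_le_one_iff_lt_of_mem_boxes {μ : ℝ} {q q' : ℝ × ℝ}
    (hq : q ∈ Ioo μ 1 ×ˢ Ioo (0 : ℝ) 1)
    (hq' : q' ∈ (Ioo (0 : ℝ) μ ∪ Ioo 1 (1 + μ)) ×ˢ Ioo (-1 : ℝ) 1) (hne : q.2 - q'.2 ≠ 1) :
    dist q q' ≤ 1 ↔ q.2 < q'.2 + 1 := by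
  obtain ⟨⟨hx₁, hx₂⟩, hy₁, hy₂⟩ := hq
  obtain ⟨hx', hy'₁, hy'₂⟩ := hq'
  have hx : |q.1 - q'.1| ≤ 1 := by
    rcases hx' with ⟨h₁, h₂⟩ | ⟨h₁, h₂⟩ <;> rw [abs_le] <;> constructor <;> linarith
  rw [Prod.dist_eq, Real.dist_eq, Real.dist_eq, max_le_iff, abs_le, abs_le]
  refine ⟨fun ⟨_, _, h⟩ => lt_of_le_of_ne (by linarith) fun h' => hne (by linarith),
    fun h => ⟨abs_le.1 hx, by linarith, by linarith⟩⟩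

theorem stmt_11_general (Δ : ℕ) (P : ℕ → Finset (ℝ × ℝ))
    (j : ℕ) (hj : j < Δ) (μ : ℝ)
    (hgen : ∀ i ≤ Δ, ∀ i' ≤ Δ, ∀ p ∈ P i, ∀ p' ∈ P i', p.2 - p'.2 ≠ 1) :
    ∃ φ ψ : ℝ × ℝ → ℝ, ∀ p₀ ∈ P 0, ∀ pΔ ∈ P Δ,
      ((∃ p : ℕ → ℝ × ℝ, p 0 = p₀ ∧ p Δ = pΔ ∧
          (∀ i, 0 < i → i < Δ → p i ∈ P i) ∧
          (∀ i < Δ, dist (p i) (p (i + 1)) ≤ 1) ∧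
          p j ∈ Set.Ioo μ 1 ×ˢ Set.Ioo (0 : ℝ) 1 ∧
          p (j + 1) ∈ (Set.Ioo (0 : ℝ) μ ∪ Set.Ioo 1 (1 + μ)) ×ˢ Set.Ioo (-1 : ℝ) 1) ↔
        φ p₀ < ψ pΔ) := by
  set A := Ioo μ 1 ×ˢ Ioo (0 : ℝ) 1
  set B := (Ioo (0 : ℝ) μ ∪ Ioo 1 (1 + μ)) ×ˢ Ioo (-1 : ℝ) 1
  set R : ℝ × ℝ → ℝ × ℝ → Prop := fun q q' => dist q q' ≤ 1
  set L : ℕ → Set (ℝ × ℝ) := fun i => P i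
  classical
  let front (p₀ : ℝ × ℝ) : Finset ℝ :=
    ((P j).filter fun q => q ∈ A ∧ ∃ p, IsLayeredWalk R L 0 j p₀ q p).image Prod.snd
  let back (pΔ : ℝ × ℝ) : Finset ℝ :=
    ((P (j + 1)).filter fun q' => q' ∈ B ∧ ∃ p, IsLayeredWalk R L (j + 1) Δ q' pΔ p).image
      (·.2 + 1)
  obtain ⟨φ, ψ, hφψ⟩ := exists_forall_exists_lt_iff_lt _ _ front back
    (fun _ => Finset.image_subset_image (Finset.filter_subset _ _))
    (fun _ => Finset.image_subset_image (Finset.filter_subset _ _))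
  refine ⟨φ, ψ, fun p₀ hp₀ pΔ hpΔ => ?_⟩
  have hchain : (∃ p : ℕ → ℝ × ℝ, p 0 = p₀ ∧ p Δ = pΔ ∧ (∀ i, 0 < i → i < Δ → p i ∈ P i) ∧
      (∀ i < Δ, dist (p i) (p (i + 1)) ≤ 1) ∧ p j ∈ A ∧ p (j + 1) ∈ B) ↔
      ∃ p, IsLayeredWalk R L 0 Δ p₀ pΔ p ∧ p j ∈ A ∧ p (j + 1) ∈ B := by
    simp [IsLayeredWalk, R, L, and_assoc]
  rw [← hφψ, hchain, exists_isLayeredWalk_iff_split (by exact hp₀) (by exact hpΔ) j.zero_le hj]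
  have hR : ∀ q ∈ P j, q ∈ A → ∀ q' ∈ P (j + 1), q' ∈ B → (R q q' ↔ q.2 < q'.2 + 1) :=
    fun q hq hA q' hq' hB =>
      dist_le_one_iff_lt_of_mem_boxes hA hB (hgen j hj.le (j + 1) hj q hq q' hq')
  simp only [front, back, Finset.exists_mem_image, Finset.mem_filter]
  constructor
  · rintro ⟨q, ⟨hq, hA⟩, q', ⟨hq', hB⟩, hqq', h₁, h₂⟩
    exact ⟨q, ⟨hq, hA, h₁⟩, q', ⟨hq', hB, h₂⟩, (hR q hq hA q' hq' hB).1 hqq'⟩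
  · rintro ⟨q, ⟨hq, hA, h₁⟩, q', ⟨hq', hB, h₂⟩, hqq'⟩
    exact ⟨q, ⟨hq, hA⟩, q', ⟨hq', hB⟩, (hR q hq hA q' hq' hB).2 hqq', h₁, h₂⟩

/-- (Lemma `unitsq1` of the paper.) Points of `ℝ²` are pairs `(x, y)`,
and `dist` on `ℝ × ℝ` is the max-norm distance, so `dist p q ≤ 1` iff the closed axis-aligned
unit squares centered at `p, q` intersect. Given finite sets `P₀, …, P_Δ`, `j < Δ`, and
`μ ∈ (0,1)`, assuming no two `y`-coordinates differ by exactly 1, there are `φ : P₀ → ℝ` and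
`ψ : P_Δ → ℝ` such that for all `(p₀, p_Δ) ∈ P₀ × P_Δ`: a chain `p₁, …, p_{Δ−1}` with
consecutive squares intersecting, `p_j ∈ (μ,1)×(0,1)` and
`p_{j+1} ∈ ((0,μ) ∪ (1,1+μ)) × (−1,1)` exists iff `φ(p₀) < ψ(p_Δ)`. -/
theorem stmt_11 (Δ : ℕ) (hΔ : 1 ≤ Δ) (P : ℕ → Finset (ℝ × ℝ))
    (j : ℕ) (hj : j < Δ) (μ : ℝ) (hμ : μ ∈ Set.Ioo (0 : ℝ) 1)
    (hgen : ∀ i ≤ Δ, ∀ i' ≤ Δ, ∀ p ∈ P i, ∀ p' ∈ P i', p.2 - p'.2 ≠ 1) :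
    ∃ φ ψ : ℝ × ℝ → ℝ, ∀ p₀ ∈ P 0, ∀ pΔ ∈ P Δ,
      ((∃ p : ℕ → ℝ × ℝ, p 0 = p₀ ∧ p Δ = pΔ ∧
          (∀ i, 0 < i → i < Δ → p i ∈ P i) ∧
          (∀ i < Δ, dist (p i) (p (i + 1)) ≤ 1) ∧
          p j ∈ Set.Ioo μ 1 ×ˢ Set.Ioo (0 : ℝ) 1 ∧
          p (j + 1) ∈ (Set.Ioo (0 : ℝ) μ ∪ Set.Ioo 1 (1 + μ)) ×ˢ Set.Ioo (-1 : ℝ) 1) ↔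
        φ p₀ < ψ pΔ) :=
  stmt_11_general Δ P j hj μ hgen
end

section
/- Let Δ ≥ 1, let P₀, …, P_Δ be finite subsets of ℝ² with P₀ ⊆ (0,1)², and let μ ∈ (0,1). Let P = P₀ ∪ ⋯ ∪ P_Δ and assume: (i) no point of P has an integer x- or y-coordinate; (ii) fract(x(p)) ≠ μ for every p ∈ P; (iii) no two points p, p' ∈ P satisfy y(p) − y(p') = 1. Then there exist D ∈ ℕ with D ≤ 4·Δ·(2Δ+1)² and functions φ : P₀ → ℝ^D, ψ : P_Δ → ℝ^D such that for every (p₀, p_Δ) ∈ P₀ × P_Δ the following are equivalent: (a) there exist p₁ ∈ P₁, …, p_{Δ−1} ∈ P_{Δ−1} and j ∈ {0, …, Δ−1} such that ‖p_i − p_{i+1}‖∞ ≤ 1 for all 0 ≤ i ≤ Δ−1, and either fract(x(p_j)) > μ and fract(x(p_{j+1})) < μ, or fract(x(p_j)) < μ and fract(x(p_{j+1})) > μ; (b) φ(p₀) does not dominate ψ(p_Δ), i.e., it is not the case that φ(p₀)_m ≥ ψ(p_Δ)_m for all coordinates m. -/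
/-!
Guess the crossing step `p_j → p_{j+1}`: its index `j`, the direction `s` of the crossing, the
unit cell `(k, l) = ⌊p_j⌋` (so `|k|, |l| ≤ Δ`, as `p₀ ∈ (0,1)²`) and whether `p_{j+1}` lies at
or above row `l`. Since `μ` separates the fractional parts of `x(p_j)` and `x(p_{j+1})`, the test
`|x(p_j) - x(p_{j+1})| ≤ 1` depends on `p_j` only through `k`; once the row side is fixed,
`|y(p_j) - y(p_{j+1})| ≤ 1` becomes one inequality `f(p_j) < g(p_{j+1})`, strict by (iii). So for
each guess a chain exists iff the least `f` over the cell points reachable from `p₀` is below the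
largest `g` over the admissible points from which `p_Δ` is reachable. These `Δ · 2 · 2 · (2Δ+1)²`
extrema are the coordinates of `φ(p₀)` and `ψ(p_Δ)`.
-/

open Finset

theorem Finset.min'_insert_lt_max'_insert_iff {α : Type*} [LinearOrder α] {A B : Finset α}
    {c d : α} (hcd : c ≤ d) (hA : ∀ x ∈ A, c ≤ x) (hB : ∀ y ∈ B, y ≤ d) :
    (insert d A).min' (insert_nonempty d A) < (insert c B).max' (insert_nonempty c B) ↔
      ∃ x ∈ A, ∃ y ∈ B, x < y := by
  rw [← not_le, max'_le_iff]
  constructor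
  · intro h
    by_contra! hAB
    refine h fun y hy => le_min' _ _ _ fun x hx => ?_
    rcases mem_insert.1 hy with rfl | hy <;> rcases mem_insert.1 hx with rfl | hx
    exacts [hcd, hA x hx, hB y hy, hAB x hx y hy]
  · rintro ⟨x, hx, y, hy, hxy⟩ h
    exact ((h y (mem_insert_of_mem hy)).trans (min'_le _ x (mem_insert_of_mem hx))).not_gt hxy

theorem exists_dominance_encoding {ι X Y : Type*} [Fintype ι] (f : ι → X → ℝ)
    (g : ι → Y → ℝ) : ∃ (φ : X → Fin (Fintype.card ι) → ℝ) (ψ : Y → Fin (Fintype.card ι) → ℝ),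
      ∀ x y, (∃ i, f i x < g i y) ↔ ¬ ∀ m, ψ y m ≤ φ x m := by
  let e := Fintype.equivFin ι
  refine ⟨fun x m => f (e.symm m) x, fun y m => g (e.symm m) y, fun x y => ?_⟩
  simp only [not_forall, not_le]
  exact e.exists_congr_left

namespace UnitSquareChain

noncomputable section

section Walks

variable {α : Type*} [PseudoMetricSpace α]

def IsWalk (P : ℕ → Finset α) (p : ℕ → α) (m n : ℕ) : Prop :=
  (∀ i, m ≤ i → i ≤ n → p i ∈ P i) ∧ ∀ i, m ≤ i → i < n → dist (p i) (p (i + 1)) ≤ 1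

def Joins (P : ℕ → Finset α) (m n : ℕ) (x y : α) : Prop :=
  ∃ q, IsWalk P q m n ∧ q m = x ∧ q n = y

variable {P : ℕ → Finset α} {m n : ℕ} {x y : α}

theorem Joins.mem_left (h : Joins P m n x y) (hmn : m ≤ n) : x ∈ P m := by
  obtain ⟨q, ⟨hmem, -⟩, rfl, -⟩ := h
  exact hmem m le_rfl hmn

theorem Joins.mem_right (h : Joins P m n x y) (hmn : m ≤ n) : y ∈ P n := by
  obtain ⟨q, ⟨hmem, -⟩, -, rfl⟩ := h
  exact hmem n hmn le_rfl

theorem Joins.dist_le (h : Joins P 0 n x y) : dist x y ≤ n := by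
  obtain ⟨q, ⟨-, hstep⟩, rfl, rfl⟩ := h
  calc dist (q 0) (q n) ≤ ∑ i ∈ range n, dist (q i) (q (i + 1)) := dist_le_range_sum_dist q n
    _ ≤ #(range n) • (1 : ℝ) :=
      sum_le_card_nsmul _ _ _ fun i hi => hstep i (Nat.zero_le i) (mem_range.1 hi)
    _ = n := by simp

theorem exists_walk_iff_joins {j : ℕ} (hmj : m ≤ j) (hjn : j < n) (R : α → α → Prop) :
    (∃ p, IsWalk P p m n ∧ p m = x ∧ p n = y ∧ R (p j) (p (j + 1))) ↔
      ∃ u v, Joins P m j x u ∧ Joins P (j + 1) n v y ∧ dist u v ≤ 1 ∧ R u v := by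
  constructor
  · rintro ⟨p, ⟨hmem, hstep⟩, rfl, rfl, hR⟩
    exact ⟨p j, p (j + 1),
      ⟨p, ⟨fun i h₁ h₂ => hmem i h₁ (by omega), fun i h₁ h₂ => hstep i h₁ (by omega)⟩, rfl, rfl⟩,
      ⟨p, ⟨fun i h₁ h₂ => hmem i (by omega) h₂, fun i h₁ h₂ => hstep i (by omega) h₂⟩, rfl, rfl⟩,
      hstep j hmj hjn, hR⟩
  · rintro ⟨-, -, ⟨q, ⟨hqmem, hqstep⟩, rfl, rfl⟩, ⟨q', ⟨hq'mem, hq'step⟩, rfl, rfl⟩, huv, hR⟩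
    refine ⟨fun i => if i ≤ j then q i else q' i, ⟨fun i h₁ h₂ => ?_, fun i h₁ h₂ => ?_⟩,
      if_pos hmj, if_neg (by omega), by simpa using hR⟩
    · dsimp only
      split_ifs with h
      exacts [hqmem i h₁ h, hq'mem i (by omega) h₂]
    · rcases lt_trichotomy i j with h | rfl | h
      · simpa [h.le, Nat.succ_le_of_lt h] using hqstep i h₁ h
      · simpa using huv
      · simpa [h.not_ge, (Nat.lt_succ_of_lt h).not_ge] using hq'step i h h₂

theorem exists_chain_iff_exists_joins {Δ : ℕ} {a b : α} (ha : a ∈ P 0) (hb : b ∈ P Δ)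
    (R : α → α → Prop) :
    (∃ p : ℕ → α, ∃ j < Δ, p 0 = a ∧ p Δ = b ∧ (∀ i, 0 < i → i < Δ → p i ∈ P i) ∧
        (∀ i < Δ, dist (p i) (p (i + 1)) ≤ 1) ∧ R (p j) (p (j + 1))) ↔
      ∃ j < Δ, ∃ u v, Joins P 0 j a u ∧ Joins P (j + 1) Δ v b ∧ dist u v ≤ 1 ∧ R u v := by
  refine Iff.trans ?_ <| exists_congr fun j => and_congr_right fun hj =>
    exists_walk_iff_joins (Nat.zero_le j) hj R
  constructor
  · rintro ⟨p, j, hj, rfl, rfl, hmem, hstep, hR⟩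
    refine ⟨j, hj, p, ⟨fun i _ hi => ?_, fun i _ hi => hstep i hi⟩, rfl, rfl, hR⟩
    rcases Nat.eq_zero_or_pos i with rfl | hi₀
    · exact ha
    rcases hi.lt_or_eq with hi | rfl
    exacts [hmem i hi₀ hi, hb]
  · rintro ⟨j, hj, p, ⟨hmem, hstep⟩, rfl, rfl, hR⟩
    exact ⟨p, j, hj, rfl, rfl, fun i _ hi => hmem i (Nat.zero_le i) hi.le,
      fun i hi => hstep i (Nat.zero_le i) hi, hR⟩

end Walks

theorem abs_sub_le_one_iff_of_fract_lt {x y : ℝ} (h : Int.fract y < Int.fract x) :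
    |x - y| ≤ 1 ↔ ⌊y⌋ = ⌊x⌋ ∨ ⌊y⌋ = ⌊x⌋ + 1 := by
  have hx := Int.floor_add_fract x
  have hy := Int.floor_add_fract y
  have := Int.fract_nonneg y
  have := Int.fract_lt_one x
  rw [abs_le]
  constructor
  · rintro ⟨h₁, h₂⟩
    have h₃ : (⌊x⌋ : ℝ) - 1 < ⌊y⌋ := by linarith
    have h₄ : (⌊y⌋ : ℝ) < ⌊x⌋ + 2 := by linarith
    norm_cast at h₃ h₄
    omega
  · rintro (h' | h') <;> rw [h'] at hy <;> push_cast at hy <;> constructor <;> linarith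

def Crossing (μ x y : ℝ) : Prop :=
  (μ < Int.fract x ∧ Int.fract y < μ) ∨ (Int.fract x < μ ∧ μ < Int.fract y)

theorem abs_sub_le_one_iff_of_crossing {μ x y : ℝ} (h : Crossing μ x y) :
    |x - y| ≤ 1 ↔ |⌊x⌋ + μ - y| ≤ 1 := by
  have hμ : 0 ≤ μ ∧ μ < 1 := by
    rcases h with ⟨h₁, h₂⟩ | ⟨h₁, h₂⟩
    · exact ⟨(Int.fract_nonneg y).trans h₂.le, h₁.trans (Int.fract_lt_one x)⟩
    · exact ⟨(Int.fract_nonneg x).trans h₁.le, h₂.trans (Int.fract_lt_one y)⟩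
  have hfract : Int.fract ((⌊x⌋ : ℝ) + μ) = μ := by
    rw [Int.fract_intCast_add, Int.fract_eq_self.2 hμ]
  have hfloor : ⌊(⌊x⌋ : ℝ) + μ⌋ = ⌊x⌋ := by
    rw [Int.floor_intCast_add, Int.floor_eq_zero_iff.2 hμ, add_zero]
  rcases h with ⟨h₁, h₂⟩ | ⟨h₁, h₂⟩
  · rw [abs_sub_le_one_iff_of_fract_lt (h₂.trans h₁),
      abs_sub_le_one_iff_of_fract_lt (x := ⌊x⌋ + μ) (by rwa [hfract]), hfloor]
  · rw [abs_sub_comm, abs_sub_comm _ y, abs_sub_le_one_iff_of_fract_lt (h₁.trans h₂),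
      abs_sub_le_one_iff_of_fract_lt (y := ⌊x⌋ + μ) (by rwa [hfract]), hfloor]

theorem abs_sub_le_one_iff_of_floor_le {x y : ℝ} (h : (⌊x⌋ : ℝ) ≤ y) (hne : y - x ≠ 1) :
    |x - y| ≤ 1 ↔ y - 1 < x := by
  have := Int.lt_floor_add_one x
  rw [abs_sub_comm, abs_le]
  constructor
  · rintro ⟨-, h'⟩
    exact sub_lt_comm.1 (h'.lt_of_ne hne)
  · intro h'
    constructor <;> linarith

theorem abs_sub_le_one_iff_of_lt_floor {x y : ℝ} (h : y < ⌊x⌋) (hne : x - y ≠ 1) :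
    |x - y| ≤ 1 ↔ x - 1 < y := by
  have := Int.floor_le x
  rw [abs_le]
  constructor
  · rintro ⟨-, h'⟩
    exact sub_lt_comm.1 (h'.lt_of_ne hne)
  · intro h'
    constructor <;> linarith

theorem floor_mem_Icc_of_abs_sub_le {a x : ℝ} {n : ℕ} (ha₀ : 0 ≤ a) (ha₁ : a < 1)
    (h : |x - a| ≤ n) : ⌊x⌋ ∈ Icc (-(n : ℤ)) n := by
  rw [abs_le] at h
  rw [mem_Icc, Int.le_floor, ← Int.lt_add_one_iff, Int.floor_lt]
  push_cast
  constructor <;> linarith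

section Plane

theorem dist_le_iff_abs_sub_le {u v : ℝ × ℝ} {r : ℝ} :
    dist u v ≤ r ↔ |u.1 - v.1| ≤ r ∧ |u.2 - v.2| ≤ r := by
  rw [Prod.dist_eq, max_le_iff, Real.dist_eq, Real.dist_eq]

def Side (μ : ℝ) (s : Bool) (x : ℝ) : Prop :=
  if s then μ < Int.fract x else Int.fract x < μ

theorem crossing_iff_exists_side {μ x y : ℝ} :
    Crossing μ x y ↔ ∃ s, Side μ s x ∧ Side μ (!s) y := by
  simp only [Crossing, Side, Bool.exists_bool, Bool.not_false, Bool.not_true, Bool.false_eq_true,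
    if_false, if_true]
  tauto

def RowSide (above : Bool) (l : ℤ) (y : ℝ) : Prop :=
  if above then (l : ℝ) ≤ y else y < l

/-- `startKey above x < endKey above y` says `y - 1 < x` if `above` and `x - 1 < y` otherwise,
in both cases as a comparison of a function of `x` with a function of `y`. -/
def startKey (above : Bool) (x : ℝ) : ℝ := if above then -x else x

def endKey (above : Bool) (y : ℝ) : ℝ := if above then 1 - y else y + 1

theorem abs_sub_le_one_iff_exists_rowSide {x y : ℝ} (h₁ : x - y ≠ 1) (h₂ : y - x ≠ 1) :
    |x - y| ≤ 1 ↔ ∃ above, RowSide above ⌊x⌋ y ∧ startKey above x < endKey above y := by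
  simp only [Bool.exists_bool, RowSide, startKey, endKey, Bool.false_eq_true, if_false, if_true]
  by_cases hy : (⌊x⌋ : ℝ) ≤ y
  · rw [abs_sub_le_one_iff_of_floor_le hy h₂]
    simp only [hy, not_lt.2 hy, false_and, true_and, false_or]
    constructor <;> intro <;> linarith
  · rw [not_le] at hy
    rw [abs_sub_le_one_iff_of_lt_floor hy h₁]
    simp only [hy, not_le.2 hy, false_and, true_and, or_false]
    constructor <;> intro <;> linarith

theorem neg_abs_floor_add_one_le_startKey (above : Bool) {x : ℝ} :
    -(|(⌊x⌋ : ℝ)| + 1) ≤ startKey above x := by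
  have := Int.floor_le x
  have := Int.lt_floor_add_one x
  have := neg_abs_le (⌊x⌋ : ℝ)
  have := le_abs_self (⌊x⌋ : ℝ)
  cases above <;> simp only [startKey, Bool.false_eq_true, if_false, if_true] <;> linarith

theorem endKey_le_abs_add_one {above : Bool} {l : ℤ} {y : ℝ} (h : RowSide above l y) :
    endKey above y ≤ |(l : ℝ)| + 1 := by
  have := neg_abs_le (l : ℝ)
  have := le_abs_self (l : ℝ)
  cases above <;> simp only [RowSide, endKey, Bool.false_eq_true, if_false, if_true] at h ⊢ <;>
    linarith

/-- `(j, s, above, k, l)`: the crossing step `j`, its direction `s`, the cell `(k, l)` of `p_j` and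
whether `p_{j+1}` lies at or above row `l`. -/
abbrev CellIndex (Δ : ℕ) : Type :=
  range Δ × Bool × Bool × Icc (-(Δ : ℤ)) Δ × Icc (-(Δ : ℤ)) Δ

theorem card_cellIndex (Δ : ℕ) : Fintype.card (CellIndex Δ) = 4 * Δ * (2 * Δ + 1) ^ 2 := by
  have h : ((Δ : ℤ) + 1 - -Δ).toNat = 2 * Δ + 1 := by omega
  simp only [Fintype.card_prod, Fintype.card_coe, card_range, Int.card_Icc, Fintype.card_bool, h]
  ring

variable (P : ℕ → Finset (ℝ × ℝ)) (Δ : ℕ) (μ : ℝ)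

open Classical in
def startCell (j : ℕ) (s : Bool) (k l : ℤ) (a : ℝ × ℝ) : Finset (ℝ × ℝ) :=
  (P j).filter fun u => Joins P 0 j a u ∧ Side μ s u.1 ∧ ⌊u.1⌋ = k ∧ ⌊u.2⌋ = l

open Classical in
def endCell (j : ℕ) (s above : Bool) (k l : ℤ) (b : ℝ × ℝ) : Finset (ℝ × ℝ) :=
  (P (j + 1)).filter fun v =>
    Joins P (j + 1) Δ v b ∧ Side μ (!s) v.1 ∧ |k + μ - v.1| ≤ 1 ∧ RowSide above l v.2

/-- The sentinels `±(|l| + 1)` bound every key of row `l`, so they never decide a comparison. -/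
def startValue (j : ℕ) (s above : Bool) (k l : ℤ) (a : ℝ × ℝ) : ℝ :=
  (insert (|(l : ℝ)| + 1) ((startCell P μ j s k l a).image fun u => startKey above u.2)).min'
    (insert_nonempty _ _)

def endValue (j : ℕ) (s above : Bool) (k l : ℤ) (b : ℝ × ℝ) : ℝ :=
  (insert (-(|(l : ℝ)| + 1)) ((endCell P Δ μ j s above k l b).image fun v => endKey above v.2)).max'
    (insert_nonempty _ _)

theorem startValue_lt_endValue_iff {j : ℕ} {s above : Bool} {k l : ℤ} {a b : ℝ × ℝ} :
    startValue P μ j s above k l a < endValue P Δ μ j s above k l b ↔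
      ∃ u ∈ startCell P μ j s k l a, ∃ v ∈ endCell P Δ μ j s above k l b,
        startKey above u.2 < endKey above v.2 := by
  classical
  rw [startValue, endValue, min'_insert_lt_max'_insert_iff (by linarith [abs_nonneg (l : ℝ)]),
    exists_mem_image]
  · simp only [exists_mem_image]
  · simp only [forall_mem_image, startCell, mem_filter]
    rintro u ⟨-, -, -, -, rfl⟩
    exact neg_abs_floor_add_one_le_startKey above
  · simp only [forall_mem_image, endCell, mem_filter]
    rintro v ⟨-, -, -, -, hv⟩
    exact endKey_le_abs_add_one hv

variable {P Δ μ}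

theorem exists_crossing_step_iff_startValue_lt_endValue {j : ℕ} (hj : j < Δ) {a b : ℝ × ℝ}
    (ha : a ∈ Set.Ico (0 : ℝ) 1 ×ˢ Set.Ico (0 : ℝ) 1)
    (hdy : ∀ i ≤ Δ, ∀ i' ≤ Δ, ∀ p ∈ P i, ∀ p' ∈ P i', p.2 - p'.2 ≠ 1) :
    (∃ u v, Joins P 0 j a u ∧ Joins P (j + 1) Δ v b ∧ dist u v ≤ 1 ∧
        Crossing μ u.1 v.1) ↔
      ∃ s above, ∃ k ∈ Icc (-(Δ : ℤ)) Δ, ∃ l ∈ Icc (-(Δ : ℤ)) Δ,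
        startValue P μ j s above k l a < endValue P Δ μ j s above k l b := by
  simp only [startValue_lt_endValue_iff, startCell, endCell, mem_filter]
  constructor
  · rintro ⟨u, v, hu, hv, huv, hcross⟩
    obtain ⟨s, hsu, hsv⟩ := crossing_iff_exists_side.1 hcross
    have hu_mem := hu.mem_right (Nat.zero_le j)
    have hv_mem := hv.mem_left hj
    rw [dist_le_iff_abs_sub_le] at huv
    obtain ⟨above, hrow, hkey⟩ := (abs_sub_le_one_iff_exists_rowSide
      (hdy j hj.le (j + 1) hj u hu_mem v hv_mem) (hdy (j + 1) hj j hj.le v hv_mem u hu_mem)).1 huv.2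
    obtain ⟨hxa, hya⟩ := dist_le_iff_abs_sub_le.1 (dist_comm a u ▸ hu.dist_le)
    refine ⟨s, above, ⌊u.1⌋, ?_, ⌊u.2⌋, ?_, u, ⟨hu_mem, hu, hsu, rfl, rfl⟩, v,
      ⟨hv_mem, hv, hsv, (abs_sub_le_one_iff_of_crossing hcross).1 huv.1, hrow⟩, hkey⟩
    · exact Icc_subset_Icc (by omega) (by omega) (floor_mem_Icc_of_abs_sub_le ha.1.1 ha.1.2 hxa)
    · exact Icc_subset_Icc (by omega) (by omega) (floor_mem_Icc_of_abs_sub_le ha.2.1 ha.2.2 hya)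
  · rintro ⟨s, above, -, -, -, -, u, ⟨hu_mem, hu, hsu, rfl, rfl⟩, v, ⟨hv_mem, hv, hsv, hx, hrow⟩,
      hkey⟩
    have hcross := crossing_iff_exists_side.2 ⟨s, hsu, hsv⟩
    refine ⟨u, v, hu, hv, dist_le_iff_abs_sub_le.2 ⟨(abs_sub_le_one_iff_of_crossing hcross).2 hx,
      (abs_sub_le_one_iff_exists_rowSide ?_ ?_).2 ⟨above, hrow, hkey⟩⟩, hcross⟩
    exacts [hdy j hj.le (j + 1) hj u hu_mem v hv_mem, hdy (j + 1) hj j hj.le v hv_mem u hu_mem]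

end Plane

end

end UnitSquareChain

open UnitSquareChain

theorem stmt_12_general (Δ : ℕ) (P : ℕ → Finset (ℝ × ℝ))
    (hP0 : ∀ p ∈ P 0, p ∈ Set.Ioo (0 : ℝ) 1 ×ˢ Set.Ioo (0 : ℝ) 1)
    (μ : ℝ)
    (hgen3 : ∀ i ≤ Δ, ∀ i' ≤ Δ, ∀ p ∈ P i, ∀ p' ∈ P i', p.2 - p'.2 ≠ 1) :
    ∃ D : ℕ, D ≤ 4 * Δ * (2 * Δ + 1) ^ 2 ∧
      ∃ φ ψ : ℝ × ℝ → (Fin D → ℝ), ∀ p₀ ∈ P 0, ∀ pΔ ∈ P Δ,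
        ((∃ p : ℕ → ℝ × ℝ, ∃ j < Δ, p 0 = p₀ ∧ p Δ = pΔ ∧
            (∀ i, 0 < i → i < Δ → p i ∈ P i) ∧
            (∀ i < Δ, dist (p i) (p (i + 1)) ≤ 1) ∧
            ((μ < Int.fract (p j).1 ∧ Int.fract (p (j + 1)).1 < μ) ∨
             (Int.fract (p j).1 < μ ∧ μ < Int.fract (p (j + 1)).1))) ↔
          ¬ (∀ m : Fin D, ψ pΔ m ≤ φ p₀ m)) := by
  obtain ⟨φ, ψ, hφψ⟩ := exists_dominance_encoding
    (fun (t : CellIndex Δ) => startValue P μ t.1 t.2.1 t.2.2.1 t.2.2.2.1 t.2.2.2.2)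
    (fun (t : CellIndex Δ) => endValue P Δ μ t.1 t.2.1 t.2.2.1 t.2.2.2.1 t.2.2.2.2)
  refine ⟨_, (card_cellIndex Δ).le, φ, ψ, fun a ha b hb => ?_⟩
  rw [← hφψ]
  refine (exists_chain_iff_exists_joins ha hb fun u v => Crossing μ u.1 v.1).trans ?_
  refine (exists_congr fun j => and_congr_right fun hj =>
    exists_crossing_step_iff_startValue_lt_endValue hj
      (Set.prod_mono Set.Ioo_subset_Ico_self Set.Ioo_subset_Ico_self (hP0 a ha)) hgen3).trans ?_
  simp only [Prod.exists, Subtype.exists, mem_range, exists_prop]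

/-- (Lemma `unitsq3` of the paper.) Points of `ℝ²` are pairs `(x, y)`,
and `dist` on `ℝ × ℝ` is the max-norm distance, so `dist p q ≤ 1` iff the closed axis-aligned
unit squares centered at `p, q` intersect; `Int.fract` is the fractional part. Given finite
sets `P₀, …, P_Δ` with `P₀ ⊆ (0,1)²` and `μ ∈ (0,1)`, under the stated general-position
assumptions there are `D ≤ 4·Δ·(2Δ+1)²` and maps `φ : P₀ → ℝ^D`, `ψ : P_Δ → ℝ^D` such that
for all `(p₀, p_Δ) ∈ P₀ × P_Δ`: a chain `p₁, …, p_{Δ−1}` with consecutive squares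
intersecting whose `x`-coordinates mod 1 cross `μ` at some step `j` exists iff `φ(p₀)` does
not dominate `ψ(p_Δ)`. -/
theorem stmt_12 (Δ : ℕ) (hΔ : 1 ≤ Δ) (P : ℕ → Finset (ℝ × ℝ))
    (hP0 : ∀ p ∈ P 0, p ∈ Set.Ioo (0 : ℝ) 1 ×ˢ Set.Ioo (0 : ℝ) 1)
    (μ : ℝ) (hμ : μ ∈ Set.Ioo (0 : ℝ) 1)
    (hgen1 : ∀ i ≤ Δ, ∀ p ∈ P i, Int.fract p.1 ≠ 0 ∧ Int.fract p.2 ≠ 0)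
    (hgen2 : ∀ i ≤ Δ, ∀ p ∈ P i, Int.fract p.1 ≠ μ)
    (hgen3 : ∀ i ≤ Δ, ∀ i' ≤ Δ, ∀ p ∈ P i, ∀ p' ∈ P i', p.2 - p'.2 ≠ 1) :
    ∃ D : ℕ, D ≤ 4 * Δ * (2 * Δ + 1) ^ 2 ∧
      ∃ φ ψ : ℝ × ℝ → (Fin D → ℝ), ∀ p₀ ∈ P 0, ∀ pΔ ∈ P Δ,
        ((∃ p : ℕ → ℝ × ℝ, ∃ j < Δ, p 0 = p₀ ∧ p Δ = pΔ ∧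
            (∀ i, 0 < i → i < Δ → p i ∈ P i) ∧
            (∀ i < Δ, dist (p i) (p (i + 1)) ≤ 1) ∧
            ((μ < Int.fract (p j).1 ∧ Int.fract (p (j + 1)).1 < μ) ∨
             (Int.fract (p j).1 < μ ∧ μ < Int.fract (p (j + 1)).1))) ↔
          ¬ (∀ m : Fin D, ψ pΔ m ≤ φ p₀ m)) :=
  stmt_12_general Δ P hP0 μ hgen3
end

section
/- Let d ≥ 2 and let u, v ∈ {0,1}^d (with entries viewed as real numbers). Define the polygonal chains C_u = ⋃_{i=1}^{d−1} [(i, u_i − 1), (i+1, u_{i+1} − 1)] and C'_v = ⋃_{i=1}^{d−1} [(i, 1 − v_i), (i+1, 1 − v_{i+1})], where [a, b] denotes the closed line segment in ℝ² from a to b. Then C_u ∩ C'_v ≠ ∅ if and only if there exists i ∈ {1, …, d} with u_i = 1 and v_i = 1; equivalently, the chains are disjoint if and only if the vectors u and v are orthogonal. -/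
/-!
Every vertex of `C_u` has height `u_i - 1 ≤ 0` and every vertex of `C'_v` has height
`1 - v_i ≥ 0`, so by convexity of half-planes the two chains can only meet on the `x`-axis.
A segment whose endpoints lie weakly on one side of the axis touches it only at an endpoint of
height `0`, or along the whole segment when both endpoints have height `0`; in either case the
point `(x, 0)` forces height `0` at the vertex `⌊x⌋`, i.e. `u_⌊x⌋ = v_⌊x⌋ = 1`. Conversely,
`(i, 0)` is a common vertex when `u_i = v_i = 1`.
-/

def chain (d : ℕ) (h : ℕ → ℝ) : Set (ℝ × ℝ) :=
  ⋃ i ∈ Finset.Ico 1 d, segment ℝ ((i : ℝ), h i) ((i : ℝ) + 1, h (i + 1))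

section chain

variable {d : ℕ} {h : ℕ → ℝ}

lemma chain_subset_of_convex {s : Set (ℝ × ℝ)} (hs : Convex ℝ s)
    (hvert : ∀ i, 1 ≤ i → i ≤ d → ((i : ℝ), h i) ∈ s) : chain d h ⊆ s := by
  simp only [chain, Set.iUnion_subset_iff, Finset.mem_Ico]
  intro i ⟨hi1, hid⟩
  have hnext := hvert (i + 1) (by omega) hid
  push_cast at hnext
  exact hs.segment_subset (hvert i hi1 hid.le) hnext

lemma vertex_mem_chain (hd : 2 ≤ d) {i : ℕ} (hi1 : 1 ≤ i) (hid : i ≤ d) :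
    ((i : ℝ), h i) ∈ chain d h := by
  simp only [chain, Set.mem_iUnion, Finset.mem_Ico]
  obtain hid | rfl := hid.lt_or_eq
  · exact ⟨i, ⟨hi1, hid⟩, left_mem_segment ℝ _ _⟩
  · obtain ⟨j, rfl⟩ : ∃ j, i = j + 1 := ⟨i - 1, by omega⟩
    refine ⟨j, ⟨by omega, by omega⟩, ?_⟩
    push_cast
    exact right_mem_segment ℝ _ _

lemma floor_fst_of_mem_segment_of_snd_eq_zero {j : ℕ} {a b : ℝ} {p : ℝ × ℝ} (hab : 0 ≤ a * b)
    (hp : p ∈ segment ℝ ((j : ℝ), a) ((j : ℝ) + 1, b)) (hp0 : p.2 = 0) :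
    (⌊p.1⌋₊ = j ∧ a = 0) ∨ (⌊p.1⌋₊ = j + 1 ∧ b = 0) := by
  rw [segment_eq_image] at hp
  obtain ⟨t, ⟨ht0, ht1⟩, rfl⟩ := hp
  simp only [Prod.smul_mk, Prod.mk_add_mk, smul_eq_mul] at hp0 ⊢
  obtain ht1 | rfl := ht1.lt_or_eq
  · left
    constructor
    · rw [Nat.floor_eq_iff (by positivity)]
      constructor <;> nlinarith
    · have ha_sq : (1 - t) * a ^ 2 = -(t * (a * b)) := by linear_combination a * hp0
      have ha_sq_nonpos : a ^ 2 ≤ 0 := nonpos_of_mul_nonpos_right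
        (ha_sq ▸ neg_nonpos.2 (mul_nonneg ht0 hab)) (sub_pos.2 ht1)
      exact pow_eq_zero_iff two_ne_zero |>.mp (le_antisymm ha_sq_nonpos (sq_nonneg a))
  · right
    constructor
    · rw [show (1 - 1) * (j : ℝ) + 1 * ((j : ℝ) + 1) = ((j + 1 : ℕ) : ℝ) by push_cast; ring]
      exact Nat.floor_natCast _
    · linarith

lemma floor_fst_of_mem_chain_of_snd_eq_zero
    (hcross : ∀ i, 1 ≤ i → i < d → 0 ≤ h i * h (i + 1)) {p : ℝ × ℝ} (hp : p ∈ chain d h)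
    (hp0 : p.2 = 0) : 1 ≤ ⌊p.1⌋₊ ∧ ⌊p.1⌋₊ ≤ d ∧ h ⌊p.1⌋₊ = 0 := by
  simp only [chain, Set.mem_iUnion, Finset.mem_Ico] at hp
  obtain ⟨j, ⟨hj1, hjd⟩, hp⟩ := hp
  obtain ⟨hfloor, hzero⟩ | ⟨hfloor, hzero⟩ :=
    floor_fst_of_mem_segment_of_snd_eq_zero (hcross j hj1 hjd) hp hp0 <;>
  exact ⟨by omega, by omega, hfloor ▸ hzero⟩

end chain

/-- For `d ≥ 2` and 0/1 vectors `u, v` (indexed by `1, …, d`), the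
polygonal chain through the points `(i, u_i − 1)` and the polygonal chain through the points
`(i, 1 − v_i)` intersect iff there is an index `i ∈ {1, …, d}` with `u_i = 1` and `v_i = 1`;
equivalently, the chains are disjoint iff `u` and `v` are orthogonal. -/
theorem stmt_14 (d : ℕ) (hd : 2 ≤ d) (u v : ℕ → ℝ)
    (hu : ∀ i, 1 ≤ i → i ≤ d → u i = 0 ∨ u i = 1)
    (hv : ∀ i, 1 ≤ i → i ≤ d → v i = 0 ∨ v i = 1) :
    ((⋃ i ∈ Finset.Ico 1 d,
        segment ℝ ((i : ℝ), u i - 1) (((i : ℝ) + 1), u (i + 1) - 1)) ∩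
      (⋃ i ∈ Finset.Ico 1 d,
        segment ℝ ((i : ℝ), 1 - v i) (((i : ℝ) + 1), 1 - v (i + 1)))).Nonempty ↔
      ∃ i, 1 ≤ i ∧ i ≤ d ∧ u i = 1 ∧ v i = 1 := by
  change (chain d (fun i => u i - 1) ∩ chain d (fun i => 1 - v i)).Nonempty ↔ _
  have hu' : ∀ i, 1 ≤ i → i ≤ d → u i - 1 ≤ 0 := fun i hi1 hid => by
    rcases hu i hi1 hid with h | h <;> linarith
  have hv' : ∀ i, 1 ≤ i → i ≤ d → 0 ≤ 1 - v i := fun i hi1 hid => by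
    rcases hv i hi1 hid with h | h <;> linarith
  constructor
  · rintro ⟨p, hpu, hpv⟩
    have hle : p.2 ≤ 0 := chain_subset_of_convex
      (convex_halfSpace_le (LinearMap.snd ℝ ℝ ℝ).isLinear 0) hu' hpu
    have hge : 0 ≤ p.2 := chain_subset_of_convex
      (convex_halfSpace_ge (LinearMap.snd ℝ ℝ ℝ).isLinear 0) hv' hpv
    obtain ⟨hi1, hid, hui⟩ := floor_fst_of_mem_chain_of_snd_eq_zero
      (fun i hi1 hid => mul_nonneg_of_nonpos_of_nonpos (hu' i hi1 hid.le) (hu' _ (by omega) hid))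
      hpu (le_antisymm hle hge)
    obtain ⟨-, -, hvi⟩ := floor_fst_of_mem_chain_of_snd_eq_zero
      (fun i hi1 hid => mul_nonneg (hv' i hi1 hid.le) (hv' _ (by omega) hid))
      hpv (le_antisymm hle hge)
    exact ⟨_, hi1, hid, by linarith, by linarith⟩
  · rintro ⟨i, hi1, hid, hui, hvi⟩
    refine ⟨((i : ℝ), 0), ?_, ?_⟩
    · simpa [hui] using vertex_mem_chain (h := fun i => u i - 1) hd hi1 hid
    · simpa [hvi] using vertex_mem_chain (h := fun i => 1 - v i) hd hi1 hid
end
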